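/- Let A be a 3×3 magic square (an integer matrix with pairwise distinct entries satisfying the 3×3 magic-square system for some magic constant M), and let x_max and x_min denote its largest and smallest entries. Then there exists an entry y of A with y ≠ x_max such that 4 * (x_max − y) < x_max − x_min; in particular, the gap between the largest and second-largest entries is strictly less than one quarter of the total spread of the entries. -/
import Mathlib

set_option maxHeartbeats 1000000

/-- The 3×3 magic-square system with magic constant `M`: all three row sums,
all three column sums, the main diagonal and the antidiagonal equal `M`. -/
def IsMagic3 (A : Matrix (Fin 3) (Fin 3) ℤ) (M : ℤ) : Prop :=
  A 0 0 + A 0 1 + A 0 2 = M ∧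
  A 1 0 + A 1 1 + A 1 2 = M ∧
  A 2 0 + A 2 1 + A 2 2 = M ∧
  A 0 0 + A 1 0 + A 2 0 = M ∧
  A 0 1 + A 1 1 + A 2 1 = M ∧
  A 0 2 + A 1 2 + A 2 2 = M ∧
  A 0 0 + A 1 1 + A 2 2 = M ∧
  A 0 2 + A 1 1 + A 2 0 = M

/-- The finset of entries of a 3×3 integer matrix. -/
def entries3 (A : Matrix (Fin 3) (Fin 3) ℤ) : Finset ℤ :=
  Finset.image (fun p : Fin 3 × Fin 3 => A p.1 p.2) Finset.univ

/-- The entry finset of a 3×3 matrix is nonempty. -/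
theorem entries3_nonempty (A : Matrix (Fin 3) (Fin 3) ℤ) :
    (entries3 A).Nonempty :=
  Finset.univ_nonempty.image _

theorem gap_below_max_less_than_quarter_spread
    (A : Matrix (Fin 3) (Fin 3) ℤ) (M : ℤ) (hmagic : IsMagic3 A M)
    (hdist : Function.Injective (fun p : Fin 3 × Fin 3 => A p.1 p.2)) :
    ∃ y ∈ entries3 A, y ≠ (entries3 A).max' (entries3_nonempty A) ∧
      4 * ((entries3 A).max' (entries3_nonempty A) - y) <
        (entries3 A).max' (entries3_nonempty A) -
          (entries3 A).min' (entries3_nonempty A) := by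
  obtain ⟨h1, h2, h3, h4, h5, h6, h7, h8⟩ := hmagic
  set x := (entries3 A).max' (entries3_nonempty A) with hxdef
  set m := (entries3 A).min' (entries3_nonempty A) with hmdef
  have hmem : ∀ i j : Fin 3, A i j ∈ entries3 A := fun i j =>
    Finset.mem_image.mpr ⟨(i, j), Finset.mem_univ _, rfl⟩
  have hub : ∀ i j : Fin 3, A i j ≤ x := fun i j =>
    Finset.le_max' _ _ (hmem i j)
  have hlb : ∀ i j : Fin 3, m ≤ A i j := fun i j =>
    Finset.min'_le _ _ (hmem i j)
  -- the max is one of the nine entries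
  have hx9 : x = A 0 0 ∨ x = A 0 1 ∨ x = A 0 2 ∨ x = A 1 0 ∨ x = A 1 1 ∨
      x = A 1 2 ∨ x = A 2 0 ∨ x = A 2 1 ∨ x = A 2 2 := by
    obtain ⟨p, -, hp⟩ := Finset.mem_image.mp
      ((entries3 A).max'_mem (entries3_nonempty A))
    obtain ⟨i, j⟩ := p
    fin_cases i <;> fin_cases j <;> simp_all
  -- distinctness facts
  have hne : ∀ (i j k l : Fin 3), (i, j) ≠ (k, l) → A i j ≠ A k l := by
    intro i j k l hijkl h
    exact hijkl (hdist h)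
  have d1 : A 0 0 ≠ A 1 1 := hne 0 0 1 1 (by decide)
  have d2 : A 0 2 ≠ A 1 1 := hne 0 2 1 1 (by decide)
  have d3 : A 0 0 ≠ A 0 2 := hne 0 0 0 2 (by decide)
  have d4 : A 0 0 ≠ A 2 0 := hne 0 0 2 0 (by decide)
  have u00 := hub 0 0; have u01 := hub 0 1; have u02 := hub 0 2
  have u10 := hub 1 0; have u11 := hub 1 1; have u12 := hub 1 2
  have u20 := hub 2 0; have u21 := hub 2 1; have u22 := hub 2 2
  have l00 := hlb 0 0; have l01 := hlb 0 1; have l02 := hlb 0 2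
  have l10 := hlb 1 0; have l11 := hlb 1 1; have l12 := hlb 1 2
  have l20 := hlb 2 0; have l21 := hlb 2 1; have l22 := hlb 2 2
  -- parametrization: c = center, p = A 0 0, q = A 0 2
  have e01 : A 0 1 = 3 * A 1 1 - A 0 0 - A 0 2 := by omega
  have e10 : A 1 0 = A 1 1 - A 0 0 + A 0 2 := by omega
  have e12 : A 1 2 = A 1 1 + A 0 0 - A 0 2 := by omega
  have e20 : A 2 0 = 2 * A 1 1 - A 0 2 := by omega
  have e21 : A 2 1 = A 0 0 + A 0 2 - A 1 1 := by omega
  have e22 : A 2 2 = 2 * A 1 1 - A 0 0 := by omega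
  have d4' : A 0 0 + A 0 2 ≠ 2 * A 1 1 := by omega
  clear h1 h2 h3 h4 h5 h6 h7 h8 hne hdist hub hlb
  rcases d1.lt_or_gt with ha | ha
  · -- A 0 0 < A 1 1, i.e. a < 0
    rcases d2.lt_or_gt with hb | hb
    · -- b < 0 : max entry is A 0 1 ; witness 2c - min(p,q)
      clear d1 d2 d4
      rcases d3.lt_or_gt with hc | hc
      · refine ⟨A 2 2, hmem 2 2, ?_, ?_⟩ <;> omega
      · refine ⟨A 2 0, hmem 2 0, ?_, ?_⟩ <;> omega
    · -- a < 0 < b : max entry is A 1 0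
      clear d1 d2 d3
      rcases d4'.lt_or_gt with hc | hc
      · refine ⟨A 2 2, hmem 2 2, ?_, ?_⟩ <;> omega
      · refine ⟨A 0 2, hmem 0 2, ?_, ?_⟩ <;> omega
  · -- A 1 1 < A 0 0, i.e. a > 0
    rcases d2.lt_or_gt with hb | hb
    · -- b < 0 < a : max entry is A 1 2
      clear d1 d2 d3
      rcases d4'.lt_or_gt with hc | hc
      · refine ⟨A 2 0, hmem 2 0, ?_, ?_⟩ <;> omega
      · refine ⟨A 0 0, hmem 0 0, ?_, ?_⟩ <;> omega
    · -- a > 0, b > 0 : max entry is A 2 1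
      clear d1 d2 d4
      rcases d3.lt_or_gt with hc | hc
      · refine ⟨A 0 2, hmem 0 2, ?_, ?_⟩ <;> omega
      · refine ⟨A 0 0, hmem 0 0, ?_, ?_⟩ <;> omega
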